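/- arXiv:0906.4409 — 4 statements merged into one kernel-verified Lean document; each statement's English description precedes it below -/
import Mathlib

section
/- Let θ ∈ ℝ, 0 < η < 1, α = π/(2η), G(1,θ,η) = {z ∈ ℂ : 0 < |z| < 1 and |arg(z e^{−iθ})| < η}, and let ζ(z) = (u² + 2u − 1)/(u² − 2u − 1) with u = (z e^{−iθ})^α (principal branch), the conformal map of G(1,θ,η) onto the unit disk. Then for every r with 1/2 < r < 1, the image under ζ of the set {z ∈ ℂ : 1/2 < |z| < r and |arg(z e^{−iθ})| < η/2} is contained in the disk {ζ ∈ ℂ : |ζ| < 1 − 2^{−π/(2η) − π/2}(1 − r)}. -/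
/-!
Write `u = (z e^{-iθ})^α`. Since `α · η/2 = π/4`, the half-angle sector is sent into
`{|arg u| < π/4}`, so `Re u > |u|/√2`; moreover `2^{-α} < |u| < r` since `|z| > 1/2` and
`α ≥ 1`. The map `ζ = (u² + 2u - 1)/(u² - 2u - 1)` satisfies
`|u² - 2u - 1|² - |u² + 2u - 1|² = 8 Re u (1 - |u|²)` and `|u² - 2u - 1| ≤ (1 + |u|)²`,
so `1 - |ζ|² ≥ 8 Re u (1 - |u|) / (1 + |u|)³ ≥ Re u (1 - |u|)`. Halving to pass from
`1 - |ζ|²` to `1 - |ζ|` and using `2^{-π/2} ≤ √2/4` gives the bound.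
-/

open Complex

/-- The sector `G(1,θ,η) = {z : 0 < |z| < 1, |arg (z e^{-iθ})| < η}`. -/
def sector (θ η : ℝ) : Set ℂ :=
  {z : ℂ | 0 < ‖z‖ ∧ ‖z‖ < 1 ∧
    |Complex.arg (z * Complex.exp (-(θ : ℂ) * Complex.I))| < η}

/-- The map `ζ(z) = (u² + 2u - 1)/(u² - 2u - 1)` where `u = (z e^{-iθ})^α`,
`α = π/(2η)`, with the principal branch power. -/
noncomputable def sectorMap (θ η : ℝ) (z : ℂ) : ℂ :=
  let u : ℂ := (z * Complex.exp (-(θ : ℂ) * Complex.I)) ^ ((Real.pi / (2 * η) : ℝ) : ℂ)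
  (u ^ 2 + 2 * u - 1) / (u ^ 2 - 2 * u - 1)

noncomputable def halfDiskMap (u : ℂ) : ℂ :=
  (u ^ 2 + 2 * u - 1) / (u ^ 2 - 2 * u - 1)

theorem sectorMap_eq_halfDiskMap (θ η : ℝ) (z : ℂ) :
    sectorMap θ η z =
      halfDiskMap ((z * Complex.exp (-(θ : ℂ) * Complex.I)) ^ ((Real.pi / (2 * η) : ℝ) : ℂ)) :=
  rfl

theorem normSq_halfDiskMap_den_sub_num (u : ℂ) :
    normSq (u ^ 2 - 2 * u - 1) - normSq (u ^ 2 + 2 * u - 1) = 8 * u.re * (1 - normSq u) := by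
  simp only [normSq_apply, pow_two, sub_re, sub_im, add_re, add_im, mul_re, mul_im,
    one_re, one_im, re_ofNat, im_ofNat]
  ring

theorem one_sub_sq_norm_halfDiskMap {u : ℂ} (hD : u ^ 2 - 2 * u - 1 ≠ 0) :
    1 - ‖halfDiskMap u‖ ^ 2 = 8 * u.re * (1 - ‖u‖ ^ 2) / ‖u ^ 2 - 2 * u - 1‖ ^ 2 := by
  have key := normSq_halfDiskMap_den_sub_num u
  simp only [← Complex.sq_norm] at key
  rw [halfDiskMap, norm_div, div_pow, ← key, sub_div,
    div_self (pow_ne_zero 2 (norm_ne_zero_iff.mpr hD))]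

theorem norm_halfDiskMap_den_le (u : ℂ) : ‖u ^ 2 - 2 * u - 1‖ ≤ (1 + ‖u‖) ^ 2 :=
  calc ‖u ^ 2 - 2 * u - 1‖ ≤ ‖u ^ 2 - 2 * u‖ + ‖(1 : ℂ)‖ := norm_sub_le _ _
    _ ≤ ‖u ^ 2‖ + ‖2 * u‖ + ‖(1 : ℂ)‖ := by gcongr; exact norm_sub_le _ _
    _ = (1 + ‖u‖) ^ 2 := by simp only [norm_pow, norm_mul, Complex.norm_two, norm_one]; ring

theorem norm_halfDiskMap_lt {u : ℂ} {c : ℝ} (hc : 0 ≤ c) (hu : ‖u‖ < 1)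
    (hre : c * ‖u‖ < u.re) :
    ‖halfDiskMap u‖ < 1 - c * ‖u‖ * (1 - ‖u‖) / 2 := by
  set t := ‖u‖
  have ht0 : 0 ≤ t := norm_nonneg u
  have hct : 0 ≤ c * t := mul_nonneg hc ht0
  have hgap : 0 < 8 * u.re * (1 - t ^ 2) :=
    mul_pos (mul_pos (by norm_num) (by linarith)) (by nlinarith)
  have hD : 0 < ‖u ^ 2 - 2 * u - 1‖ ^ 2 := by
    have := normSq_halfDiskMap_den_sub_num u
    rw [← Complex.sq_norm, ← Complex.sq_norm, ← Complex.sq_norm] at this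
    nlinarith [sq_nonneg ‖u ^ 2 + 2 * u - 1‖]
  have hDle : ‖u ^ 2 - 2 * u - 1‖ ^ 2 ≤ (1 + t) ^ 4 := by
    rw [show (1 + t) ^ 4 = ((1 + t) ^ 2) ^ 2 by ring]
    exact pow_le_pow_left₀ (norm_nonneg _) (norm_halfDiskMap_den_le u) 2
  have hsq : c * t * (1 - t) < 1 - ‖halfDiskMap u‖ ^ 2 := by
    rw [one_sub_sq_norm_halfDiskMap (by simpa using hD.ne'), lt_div_iff₀ hD]
    have hct' : 0 ≤ c * t * (1 - t) := mul_nonneg hct (by linarith)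
    calc c * t * (1 - t) * ‖u ^ 2 - 2 * u - 1‖ ^ 2 ≤ c * t * (1 - t) * (1 + t) ^ 4 := by
          gcongr
      _ = c * t * (1 - t) * (1 + t) * (1 + t) ^ 3 := by ring
      _ ≤ c * t * (1 - t) * (1 + t) * 2 ^ 3 := by
          have : 0 ≤ c * t * (1 - t) * (1 + t) := mul_nonneg hct' (by linarith)
          gcongr
          linarith
      _ = 8 * (c * t) * (1 - t ^ 2) := by ring
      _ < 8 * u.re * (1 - t ^ 2) := by gcongr; nlinarith
  nlinarith [sq_nonneg (1 - ‖halfDiskMap u‖)]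

theorem sqrt_two_div_two_mul_norm_lt_re_cpow {w : ℂ} {α : ℝ} (hw : w ≠ 0)
    (harg : |arg w * α| < Real.pi / 4) :
    √2 / 2 * ‖w ^ (α : ℂ)‖ < (w ^ (α : ℂ)).re := by
  have hcos : √2 / 2 < Real.cos (arg w * α) := by
    rw [← Real.cos_pi_div_four, ← Real.cos_abs (arg w * α)]
    exact Real.cos_lt_cos_of_nonneg_of_le_pi (abs_nonneg _) (by linarith [Real.pi_pos]) harg
  rw [cpow_ofReal_re, norm_cpow_real, mul_comm]
  exact mul_lt_mul_of_pos_left hcos (Real.rpow_pos_of_pos (norm_pos_iff.mpr hw) α)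

theorem two_rpow_neg_mul_one_sub_lt {a r α : ℝ} (ha : 1 / 2 < a) (har : a < r) (hr : r < 1)
    (hα : 1 ≤ α) :
    (2 : ℝ) ^ (-α) * (1 - r) < a ^ α * (1 - a ^ α) := by
  have hα0 : 0 < α := by linarith
  have hlow : (2 : ℝ) ^ (-α) < a ^ α := by
    rw [Real.rpow_neg zero_le_two, ← Real.inv_rpow zero_le_two, ← one_div]
    exact Real.rpow_lt_rpow (by norm_num) ha hα0
  have hup : a ^ α < r :=
    calc a ^ α < r ^ α := Real.rpow_lt_rpow (by linarith) har hα0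
      _ ≤ r ^ (1 : ℝ) := Real.rpow_le_rpow_of_exponent_ge (by linarith) hr.le hα
      _ = r := Real.rpow_one r
  exact mul_lt_mul hlow (by linarith) (by linarith) (Real.rpow_nonneg (by linarith) α)

theorem two_rpow_neg_pi_div_two_le : (2 : ℝ) ^ (-(Real.pi / 2)) ≤ √2 / 4 :=
  calc (2 : ℝ) ^ (-(Real.pi / 2)) ≤ (2 : ℝ) ^ ((1 / 2 : ℝ) - 2) :=
        Real.rpow_le_rpow_of_exponent_le one_le_two (by linarith [Real.pi_gt_three])
    _ = √2 / 4 := by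
        rw [Real.rpow_sub two_pos, ← Real.sqrt_eq_rpow, Real.rpow_two]
        norm_num

theorem sectorMap_image_subset_disk_general (θ η : ℝ) (hη0 : 0 < η) (hη1 : η < 1)
    (r : ℝ) (hr1 : r < 1) :
    (sectorMap θ η) ''
        {z : ℂ | 1 / 2 < ‖z‖ ∧ ‖z‖ < r ∧
          |Complex.arg (z * Complex.exp (-(θ : ℂ) * Complex.I))| < η / 2}
      ⊆ {w : ℂ |
          ‖w‖ < 1 - (2 : ℝ) ^ (-(Real.pi / (2 * η)) - Real.pi / 2) * (1 - r)} := by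
  rintro _ ⟨z, ⟨hz1, hz2, hz3⟩, rfl⟩
  set α := Real.pi / (2 * η)
  set w := z * Complex.exp (-(θ : ℂ) * Complex.I)
  have hw : ‖w‖ = ‖z‖ := by simp [w, Complex.norm_exp]
  have hα : 1 ≤ α := by
    rw [le_div_iff₀ (by linarith)]
    linarith [Real.pi_gt_three]
  have harg : |arg w * α| < Real.pi / 4 := by
    rw [abs_mul, abs_of_pos (by linarith : 0 < α)]
    calc |arg w| * α < η / 2 * α := by gcongr
      _ = Real.pi / 4 := by simp only [α]; field_simp; ring
  have hre := sqrt_two_div_two_mul_norm_lt_re_cpow (norm_pos_iff.mp (by linarith)) harg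
  have hζ := norm_halfDiskMap_lt (by positivity) (by
    rw [norm_cpow_real, hw]
    exact Real.rpow_lt_one (norm_nonneg z) (by linarith) (by linarith)) hre
  rw [norm_cpow_real, hw] at hζ
  have hgap := two_rpow_neg_mul_one_sub_lt hz1 hz2 hr1 hα
  have hc := mul_le_mul_of_nonneg_left two_rpow_neg_pi_div_two_le
    (mul_nonneg (Real.rpow_nonneg zero_le_two (-α)) (by linarith : (0 : ℝ) ≤ 1 - r))
  rw [Set.mem_ofPred_eq, sectorMap_eq_halfDiskMap,
    show -α - Real.pi / 2 = -α + -(Real.pi / 2) by ring, Real.rpow_add two_pos]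
  calc ‖halfDiskMap (w ^ (α : ℂ))‖ < 1 - √2 / 2 * ‖z‖ ^ α * (1 - ‖z‖ ^ α) / 2 := hζ
    _ ≤ 1 - 2 ^ (-α) * (1 - r) * (√2 / 4) := by nlinarith [Real.sqrt_nonneg 2]
    _ ≤ 1 - 2 ^ (-α) * 2 ^ (-(Real.pi / 2)) * (1 - r) := by linarith

/-- For every `1/2 < r < 1`, the image under `ζ` of the truncated
half-angle sector `{z : 1/2 < |z| < r, |arg (z e^{-iθ})| < η/2}` is contained in the disk
`{ζ : |ζ| < 1 - 2^{-π/(2η) - π/2} (1 - r)}`. -/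
theorem sectorMap_image_subset_disk (θ η : ℝ) (hη0 : 0 < η) (hη1 : η < 1)
    (r : ℝ) (hr0 : 1 / 2 < r) (hr1 : r < 1) :
    (sectorMap θ η) ''
        {z : ℂ | 1 / 2 < ‖z‖ ∧ ‖z‖ < r ∧
          |Complex.arg (z * Complex.exp (-(θ : ℂ) * Complex.I))| < η / 2}
      ⊆ {w : ℂ |
          ‖w‖ < 1 - (2 : ℝ) ^ (-(Real.pi / (2 * η)) - Real.pi / 2) * (1 - r)} :=
  sectorMap_image_subset_disk_general θ η hη0 hη1 r hr1
end

section
/- Let θ ∈ ℝ, 0 < η < 1, α = π/(2η), G(1,θ,η) = {z ∈ ℂ : 0 < |z| < 1 and |arg(z e^{−iθ})| < η}, and let ζ(z) = (u² + 2u − 1)/(u² − 2u − 1) with u = (z e^{−iθ})^α (principal branch), the conformal map of G(1,θ,η) onto the unit disk, with inverse map z = z(ζ). Then for every γ with 0 < γ < 1, the image under z(·) of the disk {ζ ∈ ℂ : |ζ| < γ} is contained in the set {z ∈ ℂ : |z| < 1 − (η/(8π))(1 − γ) and |arg(z e^{−iθ})| < η}. -/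
open Complex

/-!
With `w = z e^{-iθ}`, `α = π/(2η)` and `u = w^α`, the point `u` lies in the right half of the
unit disk and `|u| = |z|^α`. On that half-disk the map `u ↦ ζ` satisfies
`|u² - 2u - 1|² - |u² + 2u - 1|² = 8 Re u (1 - |u|²)` and `|u² - 2u - 1| ≥ 1`, whence
`1 - |ζ| ≤ 16 (1 - |u|)`. Bernoulli's inequality for the exponent `1/α = 2η/π ≤ 1` gives
`|z| = |u|^{1/α} ≤ 1 - (1 - |u|)/α`, so `(η/(8π))(1 - |ζ|) ≤ 1 - |z|`.
-/

namespace Complex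

theorem normSq_sq_sub_two_mul_sub_one_sub_normSq (u : ℂ) :
    normSq (u ^ 2 - 2 * u - 1) - normSq (u ^ 2 + 2 * u - 1) = 8 * u.re * (1 - normSq u) := by
  simp only [normSq_apply, pow_two, sub_re, sub_im, add_re, add_im, mul_re, mul_im, one_re,
    one_im, re_ofNat, im_ofNat]
  ring

theorem one_le_normSq_sq_sub_two_mul_sub_one {u : ℂ} (hre : 0 ≤ u.re) (hu : normSq u ≤ 1) :
    1 ≤ normSq (u ^ 2 - 2 * u - 1) := by
  have hD : normSq (u ^ 2 - 2 * u - 1) =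
      (u.re ^ 2 - u.im ^ 2 - 2 * u.re - 1) ^ 2 + 4 * u.im ^ 2 * (u.re - 1) ^ 2 := by
    simp only [normSq_apply, pow_two, sub_re, sub_im, mul_re, mul_im, one_re, one_im, re_ofNat,
      im_ofNat]
    ring
  rw [normSq_apply] at hu
  rw [hD]
  nlinarith [mul_nonneg hre (sq_nonneg u.im), sq_nonneg (u.re * (u.re - 2)), sq_nonneg u.im]

theorem one_sub_norm_div_le {u : ℂ} (hre : 0 ≤ u.re) (hu : ‖u‖ ≤ 1) :
    1 - ‖(u ^ 2 + 2 * u - 1) / (u ^ 2 - 2 * u - 1)‖ ≤ 16 * (1 - ‖u‖) := by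
  set ζ := (u ^ 2 + 2 * u - 1) / (u ^ 2 - 2 * u - 1)
  have hnormSq : 1 - normSq u = 1 - ‖u‖ ^ 2 := by rw [Complex.sq_norm]
  have hu2 : 0 ≤ 1 - ‖u‖ ^ 2 := by nlinarith [norm_nonneg u]
  have hD : 1 ≤ normSq (u ^ 2 - 2 * u - 1) :=
    one_le_normSq_sq_sub_two_mul_sub_one hre (by linarith)
  have hsq : 1 - ‖ζ‖ ^ 2 ≤ 8 * (1 - ‖u‖ ^ 2) :=
    calc 1 - ‖ζ‖ ^ 2
        = 8 * u.re * (1 - ‖u‖ ^ 2) / normSq (u ^ 2 - 2 * u - 1) := by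
          rw [Complex.sq_norm, normSq_div, ← hnormSq,
            ← normSq_sq_sub_two_mul_sub_one_sub_normSq, sub_div, div_self (by positivity)]
      _ ≤ 8 * u.re * (1 - ‖u‖ ^ 2) := div_le_self (by positivity) hD
      _ ≤ 8 * (1 - ‖u‖ ^ 2) := by
          nlinarith [mul_nonneg (sub_nonneg.mpr ((re_le_norm u).trans hu)) hu2]
  rcases le_total ‖ζ‖ 1 with hζ | hζ
  · nlinarith [norm_nonneg ζ, norm_nonneg u]
  · nlinarith [norm_nonneg u]

theorem re_cpow_ofReal_pos {w : ℂ} (hw : w ≠ 0) {α : ℝ} (harg : |w.arg * α| < Real.pi / 2) :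
    0 < (w ^ (α : ℂ)).re := by
  rw [cpow_ofReal_re]
  exact mul_pos (Real.rpow_pos_of_pos (norm_pos_iff.mpr hw) α)
    (Real.cos_pos_of_mem_Ioo (abs_lt.mp harg))

theorem norm_mul_exp_neg_ofReal_mul_I (z : ℂ) (θ : ℝ) :
    ‖z * exp (-(θ : ℂ) * I)‖ = ‖z‖ := by
  rw [norm_mul, ← ofReal_neg, norm_exp_ofReal_mul_I, mul_one]

end Complex

theorem mul_one_sub_norm_sectorMap_le {θ η : ℝ} (hη0 : 0 < η) (hη : η ≤ Real.pi / 2) {z : ℂ}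
    (hz : z ∈ sector θ η) :
    η / (8 * Real.pi) * (1 - ‖sectorMap θ η z‖) ≤ 1 - ‖z‖ := by
  obtain ⟨hz0, hz1, harg⟩ := hz
  set w := z * exp (-(θ : ℂ) * I)
  set α := Real.pi / (2 * η)
  set u := w ^ (α : ℂ)
  have hα : 0 < α := by positivity
  have hα1 : α⁻¹ ≤ 1 := by
    rw [inv_div]
    exact (div_le_one Real.pi_pos).mpr (by linarith)
  have hw : ‖w‖ = ‖z‖ := norm_mul_exp_neg_ofReal_mul_I z θ
  have hu : ‖u‖ = ‖z‖ ^ α := by rw [norm_cpow_real, hw]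
  have hu1 : ‖u‖ ≤ 1 := hu ▸ Real.rpow_le_one hz0.le hz1.le hα.le
  have hre : 0 < u.re := by
    refine re_cpow_ofReal_pos (norm_pos_iff.mp (hw ▸ hz0)) ?_
    calc |w.arg * α| = |w.arg| * α := by rw [abs_mul, abs_of_pos hα]
      _ < η * α := by gcongr
      _ = Real.pi / 2 := by simp only [α]; field_simp
  have hζ : 1 - ‖sectorMap θ η z‖ ≤ 16 * (1 - ‖u‖) := one_sub_norm_div_le hre.le hu1
  have hbernoulli : ‖z‖ ≤ 1 - α⁻¹ * (1 - ‖u‖) := by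
    have h := rpow_one_add_le_one_add_mul_self (s := ‖u‖ - 1) (by linarith [norm_nonneg u])
      (inv_nonneg.mpr hα.le) hα1
    rw [add_sub_cancel, hu, Real.rpow_rpow_inv hz0.le hα.ne'] at h
    rw [hu]
    linarith
  have hconst : η / (8 * Real.pi) = α⁻¹ / 16 := by
    simp only [α, inv_div]
    field_simp
    ring
  calc η / (8 * Real.pi) * (1 - ‖sectorMap θ η z‖)
      ≤ α⁻¹ / 16 * (16 * (1 - ‖u‖)) := by rw [hconst]; gcongr
    _ = α⁻¹ * (1 - ‖u‖) := by ring
    _ ≤ 1 - ‖z‖ := by linarith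

theorem sectorMap_inv_image_subset_general (θ η : ℝ) (hη0 : 0 < η) (hη1 : η < 1)
    (zinv : ℂ → ℂ)
    (hmaps : Set.MapsTo zinv (Metric.ball (0 : ℂ) 1) (sector θ η))
    (hinv : Set.InvOn zinv (sectorMap θ η) (sector θ η) (Metric.ball (0 : ℂ) 1))
    (γ : ℝ) (hγ1 : γ < 1) :
    zinv '' (Metric.ball (0 : ℂ) γ) ⊆
      {z : ℂ | ‖z‖ < 1 - (η / (8 * Real.pi)) * (1 - γ) ∧
        |Complex.arg (z * Complex.exp (-(θ : ℂ) * Complex.I))| < η} := by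
  rintro _ ⟨ζ, hζγ, rfl⟩
  rw [mem_ball_zero_iff] at hζγ
  have hζ1 : ζ ∈ Metric.ball (0 : ℂ) 1 := mem_ball_zero_iff.mpr (hζγ.trans hγ1)
  have hz : zinv ζ ∈ sector θ η := hmaps hζ1
  have hbound := mul_one_sub_norm_sectorMap_le hη0 (by linarith [Real.pi_gt_three]) hz
  rw [hinv.2 hζ1] at hbound
  refine ⟨?_, hz.2.2⟩
  have hγζ : η / (8 * Real.pi) * (1 - γ) < η / (8 * Real.pi) * (1 - ‖ζ‖) := by gcongr
  linarith

/-- Let `z = z(ζ)` (`zinv` below) be the inverse of the conformal map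
`ζ : G(1,θ,η) → {|ζ| < 1}`. Then for every `0 < γ < 1`, the image under `z(·)` of the disk
`{ζ : |ζ| < γ}` is contained in `{z : |z| < 1 - (η/(8π))(1 - γ), |arg (z e^{-iθ})| < η}`. -/
theorem sectorMap_inv_image_subset (θ η : ℝ) (hη0 : 0 < η) (hη1 : η < 1)
    (zinv : ℂ → ℂ)
    (hbij : Set.BijOn (sectorMap θ η) (sector θ η) (Metric.ball (0 : ℂ) 1))
    (hmaps : Set.MapsTo zinv (Metric.ball (0 : ℂ) 1) (sector θ η))
    (hinv : Set.InvOn zinv (sectorMap θ η) (sector θ η) (Metric.ball (0 : ℂ) 1))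
    (γ : ℝ) (hγ0 : 0 < γ) (hγ1 : γ < 1) :
    zinv '' (Metric.ball (0 : ℂ) γ) ⊆
      {z : ℂ | ‖z‖ < 1 - (η / (8 * Real.pi)) * (1 - γ) ∧
        |Complex.arg (z * Complex.exp (-(θ : ℂ) * Complex.I))| < η} :=
  sectorMap_inv_image_subset_general θ η hη0 hη1 zinv hmaps hinv γ hγ1
end

section
/- Let θ ∈ ℝ, 0 < η < 1, α = π/(2η), G(1,θ,η) = {z ∈ ℂ : 0 < |z| < 1 and |arg(z e^{−iθ})| < η}, let ζ(z) = (u² + 2u − 1)/(u² − 2u − 1) with u = (z e^{−iθ})^α (principal branch) be the conformal map of G(1,θ,η) onto the unit disk, and let z = z(ζ) be its inverse, a holomorphic map of the unit disk into the unit disk. Then for every t with 0 < t < 1, the Nevanlinna characteristic of the derivative z′(ζ) satisfies T(t, z′) ≤ 3 log(2/(1−t)); equivalently, since z′ is holomorphic (pole free) on the unit disk, (1/2π) ∫₀^{2π} log⁺ |z′(t e^{iφ})| dφ ≤ 3 log(2/(1−t)). -/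
open Complex

/-! The Cauchy estimate on the disk of radius `1 - t` around a point with `|ζ| = t` bounds the
derivative of any self-map of the unit disk by `2 / (1 - t)`, so `log⁺ |z'| ≤ log (2 / (1 - t))`
pointwise on that circle, and averaging gives `T(t, z') ≤ log (2 / (1 - t))`. -/

open Metric
open scoped Real

section

variable {E : Type*} [NormedAddCommGroup E] [NormedSpace ℂ E] {f : ℂ → E}

theorem norm_deriv_le_two_div_one_sub_norm (hd : DifferentiableOn ℂ f (ball 0 1))
    (hmaps : Set.MapsTo f (ball 0 1) (closedBall 0 1)) {ζ : ℂ} (hζ : ‖ζ‖ < 1) :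
    ‖deriv f ζ‖ ≤ 2 / (1 - ‖ζ‖) := by
  have hsub : ball ζ (1 - ‖ζ‖) ⊆ ball 0 1 := ball_subset_ball' (by simp)
  refine norm_deriv_le_div_of_mapsTo_ball (hd.mono hsub) (fun w hw => ?_) (by linarith)
  have hw₁ : ‖f w‖ ≤ 1 := by simpa using hmaps (hsub hw)
  have hζ₁ : ‖f ζ‖ ≤ 1 := by simpa using hmaps (hsub (mem_ball_self (by linarith)))
  rw [mem_closedBall, dist_eq_norm]
  linarith [norm_sub_le (f w) (f ζ)]

theorem circleAverage_posLog_norm_deriv_le [CompleteSpace E]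
    (hd : DifferentiableOn ℂ f (ball 0 1)) (hmaps : Set.MapsTo f (ball 0 1) (closedBall 0 1))
    {t : ℝ} (ht0 : 0 ≤ t) (ht1 : t < 1) :
    Real.circleAverage (fun z => log⁺ ‖deriv f z‖) 0 t ≤ Real.log (2 / (1 - t)) := by
  have hone : 1 ≤ 2 / (1 - t) := by rw [le_div_iff₀ (by linarith)]; linarith
  have hcont : ContinuousOn (fun z => log⁺ ‖deriv f z‖) (sphere 0 t) :=
    Real.continuous_posLog.comp_continuousOn
      ((hd.deriv isOpen_ball).continuousOn.norm.mono (sphere_subset_ball ht1))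
  refine Real.circleAverage_mono_on_of_le_circle (hcont.circleIntegrable ht0) fun z hz => ?_
  have hnorm : ‖z‖ = t := by simpa [abs_of_nonneg ht0] using hz
  have hderiv : ‖deriv f z‖ ≤ 2 / (1 - t) :=
    hnorm ▸ norm_deriv_le_two_div_one_sub_norm hd hmaps (hnorm ▸ ht1)
  calc log⁺ ‖deriv f z‖ ≤ log⁺ (2 / (1 - t)) :=
        Real.posLog_le_posLog (norm_nonneg _) hderiv
    _ = Real.log (2 / (1 - t)) := Real.posLog_eq_log (by rwa [abs_of_pos (by linarith)])

end

theorem characteristic_deriv_inverse_le_general (θ η : ℝ)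
    (zinv : ℂ → ℂ)
    (hmaps : Set.MapsTo zinv (Metric.ball (0 : ℂ) 1) (sector θ η))
    (hdiff : DifferentiableOn ℂ zinv (Metric.ball (0 : ℂ) 1))
    (t : ℝ) (ht0 : 0 < t) (ht1 : t < 1) :
    (1 / (2 * Real.pi)) * ∫ φ in (0:ℝ)..(2 * Real.pi),
        max (Real.log (‖deriv zinv ((t : ℂ) * Complex.exp ((φ : ℂ) * Complex.I))‖)) 0
      ≤ 3 * Real.log (2 / (1 - t)) := by
  have hdisk : Set.MapsTo zinv (ball 0 1) (closedBall 0 1) := fun w hw =>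
    mem_closedBall_zero_iff.2 (hmaps hw).2.1.le
  have hlog : 0 ≤ Real.log (2 / (1 - t)) :=
    Real.log_nonneg (by rw [le_div_iff₀ (by linarith)]; linarith)
  have hT := circleAverage_posLog_norm_deriv_le hdiff hdisk ht0.le ht1
  rw [Real.circleAverage_def, smul_eq_mul] at hT
  simp only [circleMap, zero_add, Real.posLog, max_comm (0 : ℝ), ← one_div] at hT
  linarith

/-- Let `z = z(ζ)` (`zinv` below) be the inverse of the conformal map
`ζ : G(1,θ,η) → {|ζ| < 1}`, a holomorphic map of the unit disk into the unit disk. Then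
for every `0 < t < 1` the Nevanlinna characteristic of `z'` satisfies
`T(t, z') = (1/2π) ∫₀^{2π} log⁺ |z'(t e^{iφ})| dφ ≤ 3 log (2/(1-t))`. -/
theorem characteristic_deriv_inverse_le (θ η : ℝ) (hη0 : 0 < η) (hη1 : η < 1)
    (zinv : ℂ → ℂ)
    (hbij : Set.BijOn (sectorMap θ η) (sector θ η) (Metric.ball (0 : ℂ) 1))
    (hmaps : Set.MapsTo zinv (Metric.ball (0 : ℂ) 1) (sector θ η))
    (hinv : Set.InvOn zinv (sectorMap θ η) (sector θ η) (Metric.ball (0 : ℂ) 1))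
    (hdiff : DifferentiableOn ℂ zinv (Metric.ball (0 : ℂ) 1))
    (t : ℝ) (ht0 : 0 < t) (ht1 : t < 1) :
    (1 / (2 * Real.pi)) * ∫ φ in (0:ℝ)..(2 * Real.pi),
        max (Real.log (‖deriv zinv ((t : ℂ) * Complex.exp ((φ : ℂ) * Complex.I))‖)) 0
      ≤ 3 * Real.log (2 / (1 - t)) :=
  characteristic_deriv_inverse_le_general θ η zinv hmaps hdiff t ht0 ht1
end

section
/- Let θ ∈ ℝ, 0 < η < 1, α = π/(2η), G(1,θ,η) = {z ∈ ℂ : 0 < |z| < 1 and |arg(z e^{−iθ})| < η}, let ζ(z) = (u² + 2u − 1)/(u² − 2u − 1) with u = (z e^{−iθ})^α (principal branch) be the conformal map of G(1,θ,η) onto the unit disk, and let z = z(ζ) be its inverse. Then for every t with 0 < t < 1, the Nevanlinna characteristic of 1/z′(ζ) satisfies T(t, 1/z′) ≤ 3 log(2/(1−t)) + log(π/η); in particular, since z′ is holomorphic and nonvanishing on the unit disk, (1/2π) ∫₀^{2π} log⁺ (1/|z′(t e^{iφ})|) dφ ≤ 3 log(2/(1−t)) + log(π/η). -/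
open Complex

/-
Where it is defined, the derivative of `z(ζ)` is the reciprocal of `ζ'(z)`. Write
`w = z e^{-iθ}` and `u = w^α`. For `z` in the sector, `u` lies in the closed right half of the
unit disk and `|α w^{α-1}| ≤ α`. Since `ζ = q(u)` with `q'(u) = -4(u² + 1)/(u² - 2u - 1)²`, and
`Re(u² - 2u - 1) ≤ -1` on that half-disk, we get `|ζ'(z)| ≤ 8α = 4π/η`. The integrand is
therefore bounded by `log(4π/η) ≤ 3 log 2 + log(π/η)`.
-/

open Real in
lemma re_cpow_ofReal_nonneg {w : ℂ} {α : ℝ} (hα : 0 ≤ α) (harg : |arg w| * α ≤ π / 2) :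
    0 ≤ (w ^ (α : ℂ)).re := by
  rw [cpow_ofReal_re]
  refine mul_nonneg (by positivity) (Real.cos_nonneg_of_mem_Icc (abs_le.mp ?_))
  rwa [abs_mul, abs_of_nonneg hα]

lemma norm_cpow_ofReal_le_one {w : ℂ} {α : ℝ} (hw : ‖w‖ ≤ 1) (hα : 0 ≤ α) :
    ‖w ^ (α : ℂ)‖ ≤ 1 := by
  rw [norm_cpow_real]
  exact Real.rpow_le_one (norm_nonneg w) hw hα

lemma norm_mul_cpow_sub_one_le {w : ℂ} {α : ℝ} (hw : ‖w‖ ≤ 1) (hα : 1 ≤ α) :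
    ‖(α : ℂ) * w ^ ((α : ℂ) - 1)‖ ≤ α := by
  have hpow : ‖w ^ ((α : ℂ) - 1)‖ ≤ 1 := by
    simpa using norm_cpow_ofReal_le_one (α := α - 1) hw (by linarith)
  rw [norm_mul, norm_real, Real.norm_of_nonneg (by linarith)]
  exact mul_le_of_le_one_right (by linarith) hpow

lemma one_le_norm_sq_sub_two_mul_sub_one {u : ℂ} (hre : 0 ≤ u.re) (hu : ‖u‖ ≤ 1) :
    1 ≤ ‖u ^ 2 - 2 * u - 1‖ := by
  have hre_le : u.re ≤ 1 := (re_le_norm u).trans hu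
  have hre_eq : (u ^ 2 - 2 * u - 1).re = u.re ^ 2 - u.im ^ 2 - 2 * u.re - 1 := by
    simp [pow_two]
  calc (1 : ℝ) ≤ |(u ^ 2 - 2 * u - 1).re| := by
        rw [hre_eq, abs_of_nonpos (by nlinarith [sq_nonneg u.im])]
        nlinarith [sq_nonneg u.im]
    _ ≤ ‖u ^ 2 - 2 * u - 1‖ := abs_re_le_norm _

lemma hasDerivAt_div_sq_sub_two_mul_sub_one {u : ℂ} (hu : u ^ 2 - 2 * u - 1 ≠ 0) :
    HasDerivAt (fun v : ℂ ↦ (v ^ 2 + 2 * v - 1) / (v ^ 2 - 2 * v - 1))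
      (-4 * (u ^ 2 + 1) / (u ^ 2 - 2 * u - 1) ^ 2) u := by
  have hnum : HasDerivAt (fun v : ℂ ↦ v ^ 2 + 2 * v - 1) (2 * u + 2) u := by
    simpa [mul_comm] using
      ((hasDerivAt_pow 2 u).add ((hasDerivAt_id u).const_mul 2)).sub_const 1
  have hden : HasDerivAt (fun v : ℂ ↦ v ^ 2 - 2 * v - 1) (2 * u - 2) u := by
    simpa [mul_comm] using
      ((hasDerivAt_pow 2 u).sub ((hasDerivAt_id u).const_mul 2)).sub_const 1
  exact (hnum.div hden hu).congr_deriv (by ring)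

lemma norm_deriv_div_sq_sub_two_mul_sub_one_le {u : ℂ} (hre : 0 ≤ u.re) (hu : ‖u‖ ≤ 1) :
    ‖-4 * (u ^ 2 + 1) / (u ^ 2 - 2 * u - 1) ^ 2‖ ≤ 8 := by
  have hden := one_le_norm_sq_sub_two_mul_sub_one hre hu
  have hnum : ‖u ^ 2 + 1‖ ≤ 2 := by
    calc ‖u ^ 2 + 1‖ ≤ ‖u‖ ^ 2 + 1 := by
          rw [← norm_pow, ← norm_one (α := ℂ)]; exact norm_add_le _ _
      _ ≤ 2 := by nlinarith [norm_nonneg u]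
  have h4 : ‖(-4 : ℂ)‖ = 4 := by norm_num
  rw [norm_div, norm_mul, norm_pow, h4, div_le_iff₀ (by positivity)]
  nlinarith [norm_nonneg (u ^ 2 + 1)]

open Real in
lemma exists_hasDerivAt_sectorMap_norm_le {θ η : ℝ} (hη0 : 0 < η) (hη : η ≤ π / 2) {z : ℂ}
    (hz : z ∈ sector θ η) : ∃ D : ℂ, HasDerivAt (sectorMap θ η) D z ∧ ‖D‖ ≤ 4 * (π / η) := by
  obtain ⟨hz0, hz1, harg⟩ := hz
  set α : ℝ := π / (2 * η)
  have hα : 1 ≤ α := by rw [le_div_iff₀ (by positivity)]; linarith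
  set e : ℂ := exp (-(θ : ℂ) * I)
  have he : ‖e‖ = 1 := by simp [e, norm_exp]
  set w : ℂ := z * e
  have hw : ‖w‖ = ‖z‖ := by rw [norm_mul, he, mul_one]
  have hslit : w ∈ slitPlane := by
    refine mem_slitPlane_iff_arg.mpr ⟨fun h ↦ ?_, norm_pos_iff.mp (hw ▸ hz0)⟩
    rw [h, abs_of_pos pi_pos] at harg
    linarith [pi_pos]
  set u : ℂ := w ^ (α : ℂ)
  have hu : ‖u‖ ≤ 1 := norm_cpow_ofReal_le_one (hw ▸ hz1.le) (by linarith)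
  have hure : 0 ≤ u.re := by
    refine re_cpow_ofReal_nonneg (by linarith) ?_
    calc |arg w| * α ≤ η * α := by gcongr
      _ = π / 2 := by simp only [α]; field_simp
  have hden : u ^ 2 - 2 * u - 1 ≠ 0 :=
    norm_pos_iff.mp (zero_lt_one.trans_le (one_le_norm_sq_sub_two_mul_sub_one hure hu))
  have hrot : HasDerivAt (fun z ↦ z * e) e z := by simpa using (hasDerivAt_id z).mul_const e
  have hcomp := (hasDerivAt_div_sq_sub_two_mul_sub_one hden).comp z
    (hrot.cpow_const (c := (α : ℂ)) hslit)
  refine ⟨_, hcomp, ?_⟩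
  rw [norm_mul, norm_mul, he, mul_one]
  calc _ ≤ 8 * α := mul_le_mul (norm_deriv_div_sq_sub_two_mul_sub_one_le hure hu)
        (norm_mul_cpow_sub_one_le (hw ▸ hz1.le) hα) (norm_nonneg _) (by norm_num)
    _ = 4 * (π / η) := by simp only [α]; field_simp; ring

theorem HasDerivAt.mul_deriv_eq_one {𝕜 : Type*} [NontriviallyNormedField 𝕜] {f g : 𝕜 → 𝕜}
    {D x : 𝕜} (hf : HasDerivAt f D (g x)) (hg : DifferentiableAt 𝕜 g x)
    (hfg : f ∘ g =ᶠ[nhds x] id) : D * _root_.deriv g x = 1 :=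
  ((hf.comp x hg.hasDerivAt).congr_of_eventuallyEq hfg.symm).unique (hasDerivAt_id x)

lemma integral_le_const_mul_of_nonneg {f : ℝ → ℝ} {a b C : ℝ} (hab : a ≤ b)
    (hf0 : ∀ x, 0 ≤ f x) (hfC : ∀ x, f x ≤ C) : ∫ x in a..b, f x ≤ C * (b - a) :=
  calc ∫ x in a..b, f x ≤ ‖∫ x in a..b, f x‖ := Real.le_norm_self _
    _ ≤ C * |b - a| := intervalIntegral.norm_integral_le_of_norm_le_const fun x _ ↦ by
        rw [Real.norm_of_nonneg (hf0 x)]; exact hfC x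
    _ = C * (b - a) := by rw [abs_of_nonneg (sub_nonneg.mpr hab)]

lemma log_four_mul_le {t x : ℝ} (ht0 : 0 ≤ t) (ht1 : t < 1) (hx : 0 < x) :
    Real.log (4 * x) ≤ 3 * Real.log (2 / (1 - t)) + Real.log x := by
  have h2 : 2 ≤ 2 / (1 - t) := by rw [le_div_iff₀ (by linarith)]; linarith
  have h8 : (4 : ℝ) ≤ (2 / (1 - t)) ^ 3 := by nlinarith [pow_le_pow_left₀ (by norm_num) h2 3]
  calc Real.log (4 * x) ≤ Real.log ((2 / (1 - t)) ^ 3 * x) := by gcongr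
    _ = 3 * Real.log (2 / (1 - t)) + Real.log x := by
        rw [Real.log_mul (by positivity) hx.ne', Real.log_pow]; push_cast; ring

theorem characteristic_inv_deriv_inverse_le_general (θ η : ℝ) (hη0 : 0 < η) (hη1 : η < 1)
    (zinv : ℂ → ℂ)
    (hmaps : Set.MapsTo zinv (Metric.ball (0 : ℂ) 1) (sector θ η))
    (hinv : Set.InvOn zinv (sectorMap θ η) (sector θ η) (Metric.ball (0 : ℂ) 1))
    (hdiff : DifferentiableOn ℂ zinv (Metric.ball (0 : ℂ) 1))
    (t : ℝ) (ht0 : 0 < t) (ht1 : t < 1) :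
    (1 / (2 * Real.pi)) * ∫ φ in (0:ℝ)..(2 * Real.pi),
        max (Real.log
          (1 / ‖deriv zinv ((t : ℂ) * Complex.exp ((φ : ℂ) * Complex.I))‖)) 0
      ≤ 3 * Real.log (2 / (1 - t)) + Real.log (Real.pi / η) := by
  set K := 4 * (Real.pi / η)
  have hK : 1 ≤ K := by
    have : 1 ≤ Real.pi / η := (one_le_div hη0).mpr (by linarith [Real.pi_gt_three])
    linarith
  have hmem (φ : ℝ) : (t : ℂ) * exp (φ * I) ∈ Metric.ball (0 : ℂ) 1 := by
    simpa [abs_of_pos ht0] using ht1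
  have hinv_deriv : ∀ ζ ∈ Metric.ball (0 : ℂ) 1, 1 / ‖deriv zinv ζ‖ ≤ K := by
    intro ζ hζ
    have hnhds := Metric.isOpen_ball.mem_nhds hζ
    obtain ⟨D, hD, hDle⟩ :=
      exists_hasDerivAt_sectorMap_norm_le hη0 (by linarith [Real.pi_gt_three]) (hmaps hζ)
    have hDz := hD.mul_deriv_eq_one (hdiff.differentiableAt hnhds)
      (Filter.eventually_of_mem hnhds hinv.2)
    rwa [one_div, ← norm_inv, inv_eq_of_mul_eq_one_left hDz]
  have hpoint (φ : ℝ) :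
      max (Real.log (1 / ‖deriv zinv (t * exp (φ * I))‖)) 0 ≤ Real.log K := by
    rw [max_comm, ← Real.posLog_apply,
      ← Real.posLog_eq_log (by rwa [abs_of_pos (by positivity)])]
    exact Real.posLog_le_posLog (by positivity) (hinv_deriv _ (hmem φ))
  calc _ ≤ (1 / (2 * Real.pi)) * (Real.log K * (2 * Real.pi - 0)) := by
        gcongr
        exact integral_le_const_mul_of_nonneg (by positivity) (fun _ ↦ le_max_right _ _) hpoint
    _ = Real.log K := by field_simp; ring
    _ ≤ _ := log_four_mul_le ht0.le ht1 (by positivity)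

/-- Let `z = z(ζ)` (`zinv` below) be the inverse of the conformal map
`ζ : G(1,θ,η) → {|ζ| < 1}`. Its derivative `z'` is holomorphic and nonvanishing on the
unit disk, and for every `0 < t < 1` the Nevanlinna characteristic of `1/z'` satisfies
`T(t, 1/z') = (1/2π) ∫₀^{2π} log⁺ (1/|z'(t e^{iφ})|) dφ ≤ 3 log (2/(1-t)) + log (π/η)`. -/
theorem characteristic_inv_deriv_inverse_le (θ η : ℝ) (hη0 : 0 < η) (hη1 : η < 1)
    (zinv : ℂ → ℂ)
    (hbij : Set.BijOn (sectorMap θ η) (sector θ η) (Metric.ball (0 : ℂ) 1))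
    (hmaps : Set.MapsTo zinv (Metric.ball (0 : ℂ) 1) (sector θ η))
    (hinv : Set.InvOn zinv (sectorMap θ η) (sector θ η) (Metric.ball (0 : ℂ) 1))
    (hdiff : DifferentiableOn ℂ zinv (Metric.ball (0 : ℂ) 1))
    (t : ℝ) (ht0 : 0 < t) (ht1 : t < 1) :
    (1 / (2 * Real.pi)) * ∫ φ in (0:ℝ)..(2 * Real.pi),
        max (Real.log
          (1 / ‖deriv zinv ((t : ℂ) * Complex.exp ((φ : ℂ) * Complex.I))‖)) 0
      ≤ 3 * Real.log (2 / (1 - t)) + Real.log (Real.pi / η) :=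
  characteristic_inv_deriv_inverse_le_general θ η hη0 hη1 zinv hmaps hinv hdiff t ht0 ht1
end
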